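/- Let (δ, ω̄, ω̲, γ) be a positive solution of system (I) at parameters s̄ ≥ 0 and z > 0. Then γ₂ ≥ γ² and ω̲₂ ≥ ω̲², and consequently Δ ≤ 1 − (L/M)·γ²·ω̲²·δ² < 1. -/

import Mathlib

open Matrix
open scoped Matrix.Norms.L2Operator ComplexOrder

noncomputable section

lemma psdRealSmul {n : Type*} [Fintype n] {A : Matrix n n ℂ} (hA : A.PosSemidef)
    {c : ℝ} (hc : 0 ≤ c) : (c • A).PosSemidef := by
  exact hA.smul hc

open scoped MatrixOrder in
def Matrix.PosSemidef.sqrt {n : Type*} [Fintype n] [DecidableEq n] {A : Matrix n n ℂ}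
    (_ : A.PosSemidef) : Matrix n n ℂ := CFC.sqrt A

open scoped MatrixOrder in
lemma Matrix.PosSemidef.sqrt_mul_self {n : Type*} [Fintype n] [DecidableEq n]
    {A : Matrix n n ℂ} (hA : A.PosSemidef) : hA.sqrt * hA.sqrt = A :=
  CFC.sqrt_mul_sqrt_self A hA.nonneg

open scoped MatrixOrder in
lemma Matrix.PosSemidef.posSemidef_sqrt {n : Type*} [Fintype n] [DecidableEq n]
    {A : Matrix n n ℂ} (hA : A.PosSemidef) : hA.sqrt.PosSemidef :=
  (CFC.sqrt_nonneg A).posSemidef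

lemma traceReSqLe (n : ℕ) (hn : 0 < n) {H : Matrix (Fin n) (Fin n) ℂ}
    (hH : H.PosSemidef) :
    ((1 / n : ℝ) * (H.trace).re) ^ 2 ≤ (1 / n : ℝ) * ((H * H).trace).re := by
  have key : (H.trace.re) ^ 2 ≤ (n : ℝ) * ((H * H).trace).re := by
    have htr : H.trace.re = ∑ i, (H i i).re := by
      simp [Matrix.trace, Matrix.diag, Complex.re_sum]
    have htr2 : ((H * H).trace).re = ∑ i, ∑ j, Complex.normSq (H i j) := by
      have : (H * H).trace = ∑ i, ∑ j, H i j * H j i := by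
        simp [Matrix.trace, Matrix.diag, Matrix.mul_apply]
      rw [this]
      rw [Complex.re_sum]
      refine Finset.sum_congr rfl fun i _ => ?_
      rw [Complex.re_sum]
      refine Finset.sum_congr rfl fun j _ => ?_
      have hji : H j i = star (H i j) := by
        conv_lhs => rw [← hH.1.eq]
        simp [Matrix.conjTranspose_apply]
      rw [hji, show star (H i j) = (starRingEnd ℂ) (H i j) from rfl, Complex.mul_conj]
      simp
    have cs : (∑ i : Fin n, (H i i).re) ^ 2 ≤ (n : ℝ) * ∑ i : Fin n, (H i i).re ^ 2 := by
      have := Finset.sum_mul_sq_le_sq_mul_sq Finset.univ (fun _ : Fin n => (1 : ℝ))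
        (fun i => (H i i).re)
      simpa [Finset.card_univ] using this
    have step : ∑ i : Fin n, (H i i).re ^ 2 ≤ ∑ i, ∑ j, Complex.normSq (H i j) := by
      refine Finset.sum_le_sum fun i _ => ?_
      calc (H i i).re ^ 2 ≤ Complex.normSq (H i i) := by
            rw [Complex.normSq_apply]; nlinarith [sq_nonneg (H i i).im]
        _ ≤ ∑ j, Complex.normSq (H i j) := by
            refine Finset.single_le_sum (fun j _ => Complex.normSq_nonneg _) (Finset.mem_univ i)
    rw [htr, htr2]
    calc (∑ i : Fin n, (H i i).re) ^ 2 ≤ (n : ℝ) * ∑ i : Fin n, (H i i).re ^ 2 := cs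
      _ ≤ (n : ℝ) * ∑ i, ∑ j, Complex.normSq (H i j) :=
          mul_le_mul_of_nonneg_left step (Nat.cast_nonneg n)
  have hn' : (0 : ℝ) < n := by exact_mod_cast hn
  have h1 : ((1 / n : ℝ)) ^ 2 * ((H.trace.re) ^ 2) ≤ (1 / n : ℝ) ^ 2 * ((n : ℝ) * ((H * H).trace).re) :=
    mul_le_mul_of_nonneg_left key (sq_nonneg _)
  calc ((1 / n : ℝ) * (H.trace).re) ^ 2 = (1 / n : ℝ) ^ 2 * ((H.trace.re) ^ 2) := by ring
    _ ≤ (1 / n : ℝ) ^ 2 * ((n : ℝ) * ((H * H).trace).re) := h1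
    _ = (1 / n : ℝ) * ((H * H).trace).re := by field_simp

lemma keyCS (n : ℕ) (hn : 0 < n) {K P : Matrix (Fin n) (Fin n) ℂ}
    (hK : K.PosSemidef) (hP : P.PosDef) :
    ((1 / n : ℝ) * ((K * P).trace).re) ^ 2 ≤ (1 / n : ℝ) * (((K * P) * (K * P)).trace).re := by
  set S := hP.posSemidef.sqrt with hSdef
  have hSS : S * S = P := hP.posSemidef.sqrt_mul_self
  have hSherm : Sᴴ = S := hP.posSemidef.posSemidef_sqrt.1.eq
  have hH : (S * K * S).PosSemidef := by
    have := hK.mul_mul_conjTranspose_same S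
    rwa [hSherm] at this
  have htr : (K * P).trace = ((S * K * S)).trace := by
    rw [← hSS]
    have e : K * (S * S) = (K * S) * S := by noncomm_ring
    rw [e, Matrix.trace_mul_comm]
    congr 1
    noncomm_ring
  have htr2 : ((K * P) * (K * P)).trace = ((S * K * S) * (S * K * S)).trace := by
    rw [← hSS]
    have e : (K * (S * S)) * (K * (S * S)) = ((K * (S * S)) * (K * S)) * S := by noncomm_ring
    rw [e, Matrix.trace_mul_comm]
    congr 1
    noncomm_ring
  rw [htr, htr2]
  exact traceReSqLe n hn hH

/-- A quadruple of reals `(δ, ωb, ωu, γ)` is a solution of system (I) at parameters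
`(sbar, z)`: the four fixed-point equations hold and all inverted matrices are invertible. -/
def IsSolutionSystemI (N L M : ℕ)
    (R1 : Matrix (Fin N) (Fin N) ℂ) (T1 R2 : Matrix (Fin L) (Fin L) ℂ)
    (T2 : Matrix (Fin M) (Fin M) ℂ) (sbar z δ ωb ωu γ : ℝ) : Prop :=
  IsUnit (z • (1 : Matrix (Fin N) (Fin N) ℂ) + (sbar * ωb + γ * ωu) • R1) ∧
  IsUnit ((1 : Matrix (Fin L) (Fin L) ℂ) + (sbar * δ) • T1 + (δ * γ) • (R2 * T1)) ∧
  IsUnit ((1 : Matrix (Fin M) (Fin M) ℂ) + ((L / M : ℝ) * δ * ωu) • T2) ∧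
  (δ : ℂ) = (L : ℂ)⁻¹ *
    (R1 * (z • (1 : Matrix (Fin N) (Fin N) ℂ) + (sbar * ωb + γ * ωu) • R1)⁻¹).trace ∧
  (ωb : ℂ) = (L : ℂ)⁻¹ *
    (T1 * ((1 : Matrix (Fin L) (Fin L) ℂ) + (sbar * δ) • T1 + (δ * γ) • (R2 * T1))⁻¹).trace ∧
  (ωu : ℂ) = (L : ℂ)⁻¹ *
    (R2 * T1 * ((1 : Matrix (Fin L) (Fin L) ℂ) + (sbar * δ) • T1 + (δ * γ) • (R2 * T1))⁻¹).trace ∧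
  (γ : ℂ) = (M : ℂ)⁻¹ *
    (T2 * ((1 : Matrix (Fin M) (Fin M) ℂ) + ((L / M : ℝ) * δ * ωu) • T2)⁻¹).trace


set_option maxHeartbeats 800000 in
theorem systemI_Delta_upper_bound
    (N L M : ℕ) (hN : 0 < N) (hL : 0 < L) (hM : 0 < M)
    (R1 : Matrix (Fin N) (Fin N) ℂ) (T1 R2 : Matrix (Fin L) (Fin L) ℂ)
    (T2 : Matrix (Fin M) (Fin M) ℂ)
    (hR1 : R1.PosSemidef) (hT1 : T1.PosSemidef) (hR2 : R2.PosSemidef) (hT2 : T2.PosSemidef)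
    (r l : ℝ) (hr : 0 < r) (hl : 0 < l)
    (hR1r : ‖R1‖ ≤ r) (hT1r : ‖T1‖ ≤ r) (hR2r : ‖R2‖ ≤ r) (hT2r : ‖T2‖ ≤ r)
    (hl1 : l ≤ (1 / L : ℝ) * ((R2 * T1).trace).re)
    (hl2 : l ≤ (1 / N : ℝ) * (R1.trace).re)
    (hl3 : l ≤ (1 / L : ℝ) * (R2.trace).re)
    (hl4 : l ≤ (1 / L : ℝ) * (T1.trace).re)
    (hl5 : l ≤ (1 / M : ℝ) * (T2.trace).re)
    (sbar z : ℝ) (hs : 0 ≤ sbar) (hz : 0 < z)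
    (δ ωb ωu γ : ℝ) (hδ : 0 < δ) (hωb : 0 < ωb) (hωu : 0 < ωu) (hγ : 0 < γ)
    (hsol : IsSolutionSystemI N L M R1 T1 R2 T2 sbar z δ ωb ωu γ)
    (Fd : Matrix (Fin N) (Fin N) ℂ)
    (hFd : Fd = (z • (1 : Matrix (Fin N) (Fin N) ℂ) + (sbar * ωb + γ * ωu) • R1)⁻¹)
    (Fo : Matrix (Fin L) (Fin L) ℂ)
    (hFo : Fo = ((1 : Matrix (Fin L) (Fin L) ℂ) + (sbar * δ) • T1 + (δ * γ) • (R2 * T1))⁻¹)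
    (Fg : Matrix (Fin M) (Fin M) ℂ)
    (hFg : Fg = ((1 : Matrix (Fin M) (Fin M) ℂ) + ((L / M : ℝ) * δ * ωu) • T2)⁻¹)
    (δ₂ δ₂I ωb₂ ωu₂ ωu₂I κ γ₂ ς Δ ΔV1 : ℝ)
    (hδ₂ : δ₂ = (1 / L : ℝ) * (((R1 * Fd) * (R1 * Fd)).trace).re)
    (hδ₂I : δ₂I = (1 / L : ℝ) * ((R1 * (Fd * Fd)).trace).re)
    (hωb₂ : ωb₂ = (1 / L : ℝ) * (((T1 * Fo) * (T1 * Fo)).trace).re)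
    (hωu₂ : ωu₂ = (1 / L : ℝ) * (((R2 * T1 * Fo) * (R2 * T1 * Fo)).trace).re)
    (hωu₂I : ωu₂I = (1 / L : ℝ) * ((R2 * T1 * (Fo * Fo)).trace).re)
    (hκ : κ = (1 / L : ℝ) * ((T1 * Fo * (R2 * T1) * Fo).trace).re)
    (hγ₂ : γ₂ = (1 / M : ℝ) * (((T2 * Fg) * (T2 * Fg)).trace).re)
    (hς : ς = 2 * sbar * γ * κ + γ ^ 2 * ωu₂ + sbar ^ 2 * ωb₂)
    (hΔ : Δ = 1 - (L / M : ℝ) * γ₂ * ωu₂ * δ ^ 2)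
    (hΔV1 : ΔV1 = (1 - ς * δ₂) * Δ - (L / M : ℝ) * γ₂ * ωu₂I ^ 2 * δ₂)
    :
    γ ^ 2 ≤ γ₂ ∧ ωu ^ 2 ≤ ωu₂ ∧
      Δ ≤ 1 - (L / M : ℝ) * γ ^ 2 * ωu ^ 2 * δ ^ 2 ∧
      1 - (L / M : ℝ) * γ ^ 2 * ωu ^ 2 * δ ^ 2 < 1 := by
  obtain ⟨hU1, hU2, hU3, hδeq, hωbeq, hωueq, hγeq⟩ := hsol
  -- γ part
  have hcM : (0:ℝ) ≤ (L / M : ℝ) * δ * ωu := by positivity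
  have hApd : ((1 : Matrix (Fin M) (Fin M) ℂ) + ((L / M : ℝ) * δ * ωu) • T2).PosDef :=
    Matrix.PosDef.add_posSemidef Matrix.PosDef.one (psdRealSmul hT2 hcM)
  have hFgPD : Fg.PosDef := by rw [hFg]; exact hApd.inv
  have hMc : ((M:ℂ))⁻¹ = (((M:ℝ)⁻¹ : ℝ) : ℂ) := by push_cast; ring
  have hγval : γ = (1 / M : ℝ) * ((T2 * Fg).trace).re := by
    have h := congrArg Complex.re hγeq
    rw [← hFg, hMc, Complex.re_ofReal_mul, Complex.ofReal_re] at h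
    rw [h, one_div]
  have hγ2ineq : γ ^ 2 ≤ γ₂ := by
    rw [hγ₂, hγval]; exact keyCS M hM hT2 hFgPD
  -- ωu part
  set C : Matrix (Fin L) (Fin L) ℂ :=
    (sbar * δ) • (1 : Matrix (Fin L) (Fin L) ℂ) + (δ * γ) • R2 with hCdef
  have hC : C.PosSemidef :=
    (psdRealSmul Matrix.PosSemidef.one (mul_nonneg hs hδ.le)).add
      (psdRealSmul hR2 (mul_nonneg hδ.le hγ.le))
  set E : Matrix (Fin L) (Fin L) ℂ :=
    (1 : Matrix (Fin L) (Fin L) ℂ) + (sbar * δ) • T1 + (δ * γ) • (R2 * T1) with hEdef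
  have hE : E = 1 + C * T1 := by
    rw [hEdef, hCdef]
    simp only [Matrix.add_mul, Matrix.smul_mul, Matrix.one_mul]
    abel
  set S := hT1.sqrt with hSdef
  have hSS : S * S = T1 := hT1.sqrt_mul_self
  have hSherm : Sᴴ = S := hT1.posSemidef_sqrt.1.eq
  have hKpsd : (S * R2 * S).PosSemidef := by
    have := hR2.mul_mul_conjTranspose_same S; rwa [hSherm] at this
  have hSCS : (S * C * S).PosSemidef := by
    have := hC.mul_mul_conjTranspose_same S; rwa [hSherm] at this
  set G : Matrix (Fin L) (Fin L) ℂ := (1 : Matrix (Fin L) (Fin L) ℂ) + S * C * S with hGdef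
  have hG : G.PosDef := Matrix.PosDef.add_posSemidef Matrix.PosDef.one hSCS
  have hGinvG : G⁻¹ * G = 1 :=
    Matrix.nonsing_inv_mul G ((Matrix.isUnit_iff_isUnit_det G).mp hG.isUnit)
  have hEEinv : E * E⁻¹ = 1 :=
    Matrix.mul_nonsing_inv E ((Matrix.isUnit_iff_isUnit_det E).mp hU2)
  have hFoE : Fo = E⁻¹ := hFo
  have hTF : T1 * Fo = S * G⁻¹ * S := by
    have h1 : S * G⁻¹ * S * E = T1 := by
      rw [hE, ← hSS, hGdef]
      have e2 : S * G⁻¹ * S * (1 + C * (S * S)) = S * (G⁻¹ * G) * S := by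
        rw [hGdef]; noncomm_ring
      rw [e2, hGinvG, Matrix.mul_one]
    calc T1 * Fo = (S * G⁻¹ * S * E) * Fo := by rw [h1]
      _ = S * G⁻¹ * S * (E * E⁻¹) := by rw [hFoE, mul_assoc]
      _ = S * G⁻¹ * S := by rw [hEEinv, Matrix.mul_one]
  have hLc : ((L:ℂ))⁻¹ = (((L:ℝ)⁻¹ : ℝ) : ℂ) := by push_cast; ring
  have hωuval : ωu = (1 / L : ℝ) * ((R2 * T1 * Fo).trace).re := by
    have h := congrArg Complex.re hωueq
    rw [← hFoE, hLc, Complex.re_ofReal_mul, Complex.ofReal_re] at h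
    rw [h, one_div]
  have hm1 : R2 * T1 * Fo = R2 * (S * G⁻¹ * S) := by rw [mul_assoc, hTF]
  have ht1 : ((R2 * T1 * Fo).trace) = (((S * R2 * S) * G⁻¹).trace) := by
    rw [hm1]
    have e : R2 * (S * G⁻¹ * S) = (R2 * (S * G⁻¹)) * S := by noncomm_ring
    rw [e, Matrix.trace_mul_comm]
    congr 1; noncomm_ring
  have ht2 : (((R2 * T1 * Fo) * (R2 * T1 * Fo)).trace)
      = ((((S * R2 * S) * G⁻¹) * ((S * R2 * S) * G⁻¹)).trace) := by
    rw [hm1]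
    have e : (R2 * (S * G⁻¹ * S)) * (R2 * (S * G⁻¹ * S))
        = ((R2 * (S * G⁻¹ * S)) * (R2 * (S * G⁻¹))) * S := by noncomm_ring
    rw [e, Matrix.trace_mul_comm]
    congr 1; noncomm_ring
  have hωu2ineq : ωu ^ 2 ≤ ωu₂ := by
    rw [hωu₂, hωuval, ht1, ht2]
    exact keyCS L hL hKpsd hG.inv
  -- conclusion
  have h4 : (0:ℝ) < (L / M : ℝ) :=
    div_pos (by exact_mod_cast hL) (by exact_mod_cast hM)
  have h5 : γ ^ 2 * ωu ^ 2 ≤ γ₂ * ωu₂ :=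
    mul_le_mul hγ2ineq hωu2ineq (sq_nonneg ωu) (le_trans (sq_nonneg γ) hγ2ineq)
  have h6 : (0:ℝ) ≤ (L / M : ℝ) * δ ^ 2 := le_of_lt (mul_pos h4 (pow_pos hδ 2))
  have hkey : (L / M : ℝ) * γ ^ 2 * ωu ^ 2 * δ ^ 2 ≤ (L / M : ℝ) * γ₂ * ωu₂ * δ ^ 2 := by
    have := mul_le_mul_of_nonneg_left h5 h6
    calc (L / M : ℝ) * γ ^ 2 * ωu ^ 2 * δ ^ 2
        = ((L / M : ℝ) * δ ^ 2) * (γ ^ 2 * ωu ^ 2) := by ring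
      _ ≤ ((L / M : ℝ) * δ ^ 2) * (γ₂ * ωu₂) := this
      _ = (L / M : ℝ) * γ₂ * ωu₂ * δ ^ 2 := by ring
  refine ⟨hγ2ineq, hωu2ineq, ?_, ?_⟩
  · rw [hΔ]
    linarith
  · have hpos : 0 < (L / M : ℝ) * γ ^ 2 * ωu ^ 2 * δ ^ 2 :=
      mul_pos (mul_pos (mul_pos h4 (pow_pos hγ 2)) (pow_pos hωu 2)) (pow_pos hδ 2)
    linarith
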